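/- In the tree reduced instance: if there exists W ⊆ V \ {z*_1} such that candidate c uniquely wins the election restricted to W, then there exists A ⊆ {1, …, m} with |A| = ℓ and ⋃_{i ∈ A} S_i = {1, …, 3ℓ}. -/

import Mathlib

/-- Vertices of the tree reduced instance: for each `i ∈ [m]`, the path `P^(i)` has
vertices `v i j` (`j : Fin 3`, the vertices `v^(i)_1, v^(i)_2, v^(i)_3`), `u i k`
(`k : Fin (3ℓ)`, the vertices `u^(i)_1, …, u^(i)_{3ℓ}`) and `w i`; the path `P^#` has
vertices `zh 0, zh 1`; the path `P^*` has vertices `zs t` for `t : Fin (m + 1 - ℓ)`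
(all 0-indexed). -/
inductive VT (ℓ m : ℕ) : Type
  | v (i : Fin m) (j : Fin 3) : VT ℓ m
  | u (i : Fin m) (k : Fin (3 * ℓ)) : VT ℓ m
  | w (i : Fin m) : VT ℓ m
  | zh (j : Fin 2) : VT ℓ m
  | zs (t : Fin (m + 1 - ℓ)) : VT ℓ m
  deriving DecidableEq

/-- The candidate set `C = U ∪ {c, d}`, where `U = {1, …, 3ℓ}`. -/
inductive CandT (ℓ : ℕ) : Type
  | elem (k : Fin (3 * ℓ)) : CandT ℓ
  | c : CandT ℓ
  | d : CandT ℓ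
  deriving DecidableEq

/-- Base edge relation of the tree reduced instance: consecutive vertices of each path
`P^(i) = (v^(i)_1, v^(i)_2, v^(i)_3, u^(i)_1, …, u^(i)_{3ℓ}, w^(i))`, of
`P^# = (z#_1, z#_2)` and of `P^* = (z*_1, …, z*_{m+1−ℓ})` are adjacent, and the last
vertex `z*_{m+1−ℓ}` of `P^*` is joined to each head `v^(i)_1` and to `z#_1`. -/
def baseRelT (ℓ m : ℕ) : VT ℓ m → VT ℓ m → Prop
  | .v i j, .v i' j' => i = i' ∧ (j : ℕ) + 1 = (j' : ℕ)
  | .v i j, .u i' k => i = i' ∧ (j : ℕ) = 2 ∧ (k : ℕ) = 0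
  | .u i k, .u i' k' => i = i' ∧ (k : ℕ) + 1 = (k' : ℕ)
  | .u i k, .w i' => i = i' ∧ (k : ℕ) + 1 = 3 * ℓ
  | .zh j, .zh j' => (j : ℕ) + 1 = (j' : ℕ)
  | .zs t, .zs t' => (t : ℕ) + 1 = (t' : ℕ)
  | .zs t, .v _ j => (t : ℕ) + 1 = m + 1 - ℓ ∧ (j : ℕ) = 0
  | .zs t, .zh j => (t : ℕ) + 1 = m + 1 - ℓ ∧ (j : ℕ) = 0
  | _, _ => False

/-- The tree of the tree reduced instance. -/
def GT (ℓ m : ℕ) : SimpleGraph (VT ℓ m) := SimpleGraph.fromRel (baseRelT ℓ m)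

/-- The voting function, given an enumeration `e i 0, e i 1, e i 2` of the elements of
each set `S_i`: `v^(i)_j` votes for `e^(i)_j`, `u^(i)_k` votes for `k`, the `w^(i)` and
`z#`'s vote for `c`, and the `z*`'s vote for `d`. -/
def τT (ℓ m : ℕ) (e : Fin m → Fin 3 → Fin (3 * ℓ)) : VT ℓ m → CandT ℓ
  | .v i j => CandT.elem (e i j)
  | .u _ k => CandT.elem k
  | .w _ => CandT.c
  | .zh _ => CandT.c
  | .zs _ => CandT.d

/-- The set `S_i`, recovered from the enumeration of its elements. -/
def SetT (ℓ m : ℕ) (e : Fin m → Fin 3 → Fin (3 * ℓ)) (i : Fin m) :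
    Finset (Fin (3 * ℓ)) :=
  Finset.image (e i) Finset.univ

/-- The distinguished vertex `x = z*_1`. -/
def xT (ℓ m : ℕ) (h : 0 < m + 1 - ℓ) : VT ℓ m := VT.zs ⟨0, h⟩

/-- `HW G W x`: the set of vertices reachable from `x` in the subgraph of `G` induced on
the complement of `W` (each step of a connecting walk must avoid `W`). -/
def HW {V : Type*} (G : SimpleGraph V) (W : Set V) (x : V) : Set V :=
  {z | Relation.ReflTransGen (fun a b => G.Adj a b ∧ a ∉ W ∧ b ∉ W) x z}

/-- Candidate `c` uniquely wins the election restricted to `W`: every other candidate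
gets strictly fewer votes among the voters of `H_W`. -/
def winsT (ℓ m : ℕ) (e : Fin m → Fin 3 → Fin (3 * ℓ)) (x : VT ℓ m)
    (W : Set (VT ℓ m)) : Prop :=
  ∀ y : CandT ℓ, y ≠ CandT.c →
    (HW (GT ℓ m) W x ∩ τT ℓ m e ⁻¹' {y}).ncard <
      (HW (GT ℓ m) W x ∩ τT ℓ m e ⁻¹' {CandT.c}).ncard


/-!
Let `H` be the part of the tree reachable from `z*_1` after deleting `W`; it is closed under
taking ancestors in the tree rooted at `z*_1`. As `z*_1` votes for `d`, candidate `c` must have a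
voter in `H`, which drags the whole path `P*` into `H`: `d` gets `m + 1 - ℓ` votes. The voters of
`c` in `H` are `z#_1`, `z#_2` and the `w^(i)` with `i` in the set `F` of surviving paths, so
`|F| ≥ m - ℓ`. An element `k` covered only by sets `S_i` with `i ∈ F` would receive the two votes
of the `v`-vertices naming it and those of the `u^(i)_k`, `i ∈ F`: at least `|F| + 2`, as many as
`c` can get. Hence `[m] \ F` covers `U` with at most `ℓ` sets, and covering `3ℓ` elements by
`3`-sets takes at least `ℓ` of them.
-/

deriving instance Fintype for VT

theorem Relation.ReflTransGen.of_ancestor {α : Type*} {r anc : α → α → Prop} {x y z : α}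
    (hroot : ∀ y, anc y x → y = x) (hstep : ∀ a b y, r a b → anc y b → anc y a ∨ y = b)
    (hz : Relation.ReflTransGen r x z) (hy : anc y z) : Relation.ReflTransGen r x y := by
  induction hz generalizing y with
  | refl => rw [hroot y hy]
  | tail hxa hab ih =>
    rcases hstep _ _ y hab hy with hya | rfl
    · exact ih hya
    · exact hxa.tail hab

namespace VT

variable {ℓ m : ℕ}

/-- The ancestor-or-self relation of the tree rooted at `z*_1`. -/
def IsAncestor : VT ℓ m → VT ℓ m → Prop
  | .zs t', .zs t => (t' : ℕ) ≤ t
  | .zs _, _ => True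
  | .zh j', .zh j => (j' : ℕ) ≤ j
  | .v i' j', .v i j => i' = i ∧ (j' : ℕ) ≤ j
  | .v i' _, .u i _ => i' = i
  | .v i' _, .w i => i' = i
  | .u i' k', .u i k => i' = i ∧ (k' : ℕ) ≤ k
  | .u i' _, .w i => i' = i
  | .w i', .w i => i' = i
  | _, _ => False

theorem eq_of_isAncestor_root {y : VT ℓ m} (h : 0 < m + 1 - ℓ) (hy : IsAncestor y (xT ℓ m h)) :
    y = xT ℓ m h := by
  cases y <;> simp_all [IsAncestor, xT, Fin.ext_iff]

theorem isAncestor_or_eq_of_adj {a b y : VT ℓ m} (hab : (GT ℓ m).Adj a b)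
    (hy : IsAncestor y b) : IsAncestor y a ∨ y = b := by
  rw [GT, SimpleGraph.fromRel_adj] at hab
  obtain ⟨-, hab | hab⟩ := hab <;>
  cases a <;> cases b <;> cases y <;>
    simp only [baseRelT, IsAncestor, reduceCtorEq, v.injEq, u.injEq, w.injEq, zh.injEq,
      zs.injEq, Fin.ext_iff, true_or] at hab hy ⊢ <;> omega

def AncestorClosed (H : Set (VT ℓ m)) : Prop := ∀ ⦃y z⦄, IsAncestor y z → z ∈ H → y ∈ H

end VT

open VT

theorem ancestorClosed_HW {ℓ m : ℕ} (W : Set (VT ℓ m)) (h : 0 < m + 1 - ℓ) :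
    AncestorClosed (HW (GT ℓ m) W (xT ℓ m h)) := fun _ _ hy hz =>
  Relation.ReflTransGen.of_ancestor (fun _ => eq_of_isAncestor_root h)
    (fun _ _ _ hab => isAncestor_or_eq_of_adj hab.1) hz hy

section Votes

variable {ℓ m : ℕ} (e : Fin m → Fin 3 → Fin (3 * ℓ)) {H : Set (VT ℓ m)}

noncomputable def votes (H : Set (VT ℓ m)) (y : CandT ℓ) : ℕ := (H ∩ τT ℓ m e ⁻¹' {y}).ncard

open Classical in
noncomputable def survivors (H : Set (VT ℓ m)) : Finset (Fin m) :=
  Finset.univ.filter fun i => w i ∈ H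

theorem votes_c_le_card_survivors_add_two : votes e H .c ≤ (survivors H).card + 2 := by
  classical
  have hsub : H ∩ τT ℓ m e ⁻¹' {.c} ⊆
      (((survivors H).image w ∪ Finset.univ.image zh : Finset (VT ℓ m)) : Set (VT ℓ m)) := by
    rintro (_ | _ | i | j | _) ⟨hz, hc⟩ <;> simp_all [τT, survivors]
  calc votes e H .c ≤ ((survivors H).image w ∪ Finset.univ.image zh).card := by
        rw [← Set.ncard_coe_finset]; exact Set.ncard_le_ncard hsub
    _ ≤ (survivors H).card + 2 := by
        grw [Finset.card_union_le, Finset.card_image_le, Finset.card_image_le]; simp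

theorem zs_mem_of_votes_c_pos (hH : AncestorClosed H) (hc : 0 < votes e H .c)
    (t : Fin (m + 1 - ℓ)) : zs t ∈ H := by
  obtain ⟨z, hz, hzc⟩ := Set.nonempty_of_ncard_ne_zero hc.ne'
  refine hH ?_ hz
  cases z <;> simp_all [τT, IsAncestor]

theorem sub_le_votes_d (hzs : ∀ t, zs t ∈ H) : m + 1 - ℓ ≤ votes e H .d :=
  calc m + 1 - ℓ = (Set.range (zs (ℓ := ℓ) (m := m))).ncard := by
        rw [Set.ncard_range_of_injective fun _ _ => zs.inj, Nat.card_eq_fintype_card,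
          Fintype.card_fin]
    _ ≤ votes e H .d := Set.ncard_le_ncard (by rintro _ ⟨t, rfl⟩; exact ⟨hzs t, rfl⟩)

@[simp]
theorem mem_survivors {i : Fin m} : i ∈ survivors H ↔ w i ∈ H := by
  simp [survivors]

theorem card_survivors_add_two_le_votes (hH : AncestorClosed H)
    {k : Fin (3 * ℓ)} {i₁ i₂ : Fin m} (hne : i₁ ≠ i₂) (h₁ : k ∈ SetT ℓ m e i₁)
    (h₂ : k ∈ SetT ℓ m e i₂) (hs₁ : i₁ ∈ survivors H) (hs₂ : i₂ ∈ survivors H) :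
    (survivors H).card + 2 ≤ votes e H (.elem k) := by
  classical
  obtain ⟨j₁, -, hj₁⟩ := Finset.mem_image.mp h₁
  obtain ⟨j₂, -, hj₂⟩ := Finset.mem_image.mp h₂
  set L : Finset (VT ℓ m) := (survivors H).image (u · k) ∪ {v i₁ j₁, v i₂ j₂}
  have hL : (L : Set (VT ℓ m)) ⊆ H ∩ τT ℓ m e ⁻¹' {.elem k} := by
    intro z hz
    simp only [L, Finset.coe_union, Finset.coe_image, Finset.coe_pair, Set.mem_union,
      Set.mem_image, Set.mem_insert_iff, Set.mem_singleton_iff, Finset.mem_coe] at hz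
    rcases hz with ⟨i, hi, rfl⟩ | rfl | rfl
    · exact ⟨hH (z := w i) rfl (mem_survivors.mp hi), rfl⟩
    · exact ⟨hH (z := w i₁) rfl (mem_survivors.mp hs₁), by simp [τT, hj₁]⟩
    · exact ⟨hH (z := w i₂) rfl (mem_survivors.mp hs₂), by simp [τT, hj₂]⟩
  have hcard : L.card = (survivors H).card + 2 := by
    rw [Finset.card_union_of_disjoint, Finset.card_image_of_injective _ fun _ _ h => (u.inj h).1,
      Finset.card_pair (by simp [hne])]
    simp [Finset.disjoint_left]
  rw [← hcard, ← Set.ncard_coe_finset]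
  exact Set.ncard_le_ncard hL

theorem biUnion_compl_survivors_eq_univ (hH : AncestorClosed H)
    (htwo : ∀ k, 2 ≤ (Finset.univ.filter fun i => k ∈ SetT ℓ m e i).card)
    (hvotes : ∀ k, votes e H (.elem k) < (survivors H).card + 2) :
    (survivors H)ᶜ.biUnion (SetT ℓ m e) = Finset.univ := by
  refine Finset.eq_univ_of_forall fun k => ?_
  obtain ⟨i₁, h₁, i₂, h₂, hne⟩ := Finset.one_lt_card.mp (htwo k)
  rw [Finset.mem_filter] at h₁ h₂
  by_contra hk
  have hs : ∀ i, k ∈ SetT ℓ m e i → i ∈ survivors H := fun i hi => by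
    by_contra hs
    exact hk (Finset.mem_biUnion.mpr ⟨i, Finset.mem_compl.mpr hs, hi⟩)
  have := card_survivors_add_two_le_votes e hH hne h₁.2 h₂.2 (hs _ h₁.2) (hs _ h₂.2)
  exact (hvotes k).not_ge this

end Votes

theorem le_card_of_biUnion_eq_univ {ℓ m : ℕ} (e : Fin m → Fin 3 → Fin (3 * ℓ))
    {A : Finset (Fin m)} (hA : A.biUnion (SetT ℓ m e) = Finset.univ) : ℓ ≤ A.card := by
  have := Finset.card_biUnion_le_card_mul A (SetT ℓ m e) 3 fun i _ =>
    Finset.card_image_le.trans (by simp)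
  rw [hA, Finset.card_univ, Fintype.card_fin] at this
  omega

/-- If some deletion set `W ⊆ V \ {z*_1}` makes candidate `c` uniquely win, then there is
an exact cover: `A ⊆ [m]` with `|A| = ℓ` and `⋃_{i ∈ A} S_i = {1, …, 3ℓ}`. -/
theorem tree_wins_implies_exact_cover (ℓ m : ℕ) (hm : ℓ ≤ m)
    (e : Fin m → Fin 3 → Fin (3 * ℓ))
    (htwo : ∀ k : Fin (3 * ℓ),
      (Finset.univ.filter fun i => k ∈ SetT ℓ m e i).card = 2)
    (hex : ∃ W : Set (VT ℓ m), xT ℓ m (by omega) ∉ W ∧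
      winsT ℓ m e (xT ℓ m (by omega)) W) :
    ∃ A : Finset (Fin m), A.card = ℓ ∧ A.biUnion (SetT ℓ m e) = Finset.univ := by
  obtain ⟨W, -, hwin⟩ := hex
  set H := HW (GT ℓ m) W (xT ℓ m (by omega))
  have hH : AncestorClosed H := ancestorClosed_HW W _
  have hwin : ∀ y ≠ .c, votes e H y < votes e H .c := hwin
  have hd_pos : 0 < votes e H .d := (Set.ncard_pos).2 ⟨_, .refl, rfl⟩
  have hdc := hwin .d (by simp)
  have hd := sub_le_votes_d e (zs_mem_of_votes_c_pos e hH (hd_pos.trans hdc))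
  have hc := votes_c_le_card_survivors_add_two e (H := H)
  have hcover := biUnion_compl_survivors_eq_univ e hH (fun k => (htwo k).ge)
    fun k => (hwin _ (by simp)).trans_le hc
  refine ⟨_, le_antisymm ?_ (le_card_of_biUnion_eq_univ e hcover), hcover⟩
  rw [Finset.card_compl, Fintype.card_fin]
  omega
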